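/- arXiv:2403.00182 — 9 statements merged into one kernel-verified Lean document; each statement's English description precedes it below -/
import Mathlib

section
/- Let f be a Boolean constraint over variables x⃗, and let P₁ = {⟨w₁:g₁⟩, …, ⟨w_m:g_m⟩} be a strict (α₁,β₁)-gadget for f with auxiliary variables b⃗. Suppose that for each i = 1,…,m, Q_i is a strict (α₂,β₂)-gadget for the constraint g_i (over the variables of g_i together with fresh auxiliary variables, pairwise disjoint for different i and disjoint from x⃗, b⃗). Then the weighted constraint problem ⋃_{i=1}^m w_i·Q_i (where w·Q denotes Q with every weight multiplied by w), viewed as a gadget for f with auxiliary variables b⃗ together with all the fresh auxiliary variables of the Q_i, is a strict (β₁(α₂−1)+α₁, β₁β₂)-gadget for f. -/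
/-!
STATEMENT 0: Composition of strict gadgets.
A constraint over variables `X` (with auxiliary variables `B`) is modeled as a Boolean
function of the assignments. The value of a weighted problem under an assignment is the
sum of the weights of the satisfied constraints. `P₁ = {⟨w i : g i⟩}` is a strict
(α₁,β₁)-gadget for `f` over `X` with auxiliaries `B`; each `Q i = {⟨u i j : q i j⟩}` is a
strict (α₂,β₂)-gadget for `g i` over `X ⊕ B` with fresh auxiliaries `C i`. The union
`⋃ i, (w i) · Q i`, viewed as a gadget for `f` with auxiliary variables `B` together with
all the `C i`, is a strict (β₁(α₂−1)+α₁, β₁β₂)-gadget for `f`.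
-/
theorem composition_of_strict_gadgets
    {X B : Type}
    (f : (X → Bool) → Bool)
    (α₁ β₁ α₂ β₂ : ℚ)
    (m : ℕ) (w : Fin m → ℚ) (g : Fin m → (X → Bool) → (B → Bool) → Bool)
    -- P₁ = {⟨w i : g i⟩} is a strict (α₁,β₁)-gadget for f with auxiliary variables B
    (hw : ∀ i, 0 < w i)
    (hβ₁ : ∑ i, w i = β₁)
    (hsat₁ : ∀ I : X → Bool, f I = true →
      (∀ J : B → Bool, ∑ i, (if g i I J then w i else 0) ≤ α₁) ∧
      (∃ J : B → Bool, ∑ i, (if g i I J then w i else 0) = α₁))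
    (hfal₁ : ∀ I : X → Bool, f I = false →
      (∀ J : B → Bool, ∑ i, (if g i I J then w i else 0) ≤ α₁ - 1) ∧
      (∃ J : B → Bool, ∑ i, (if g i I J then w i else 0) = α₁ - 1))
    -- for each i, Q i = {⟨u i j : q i j⟩} is a strict (α₂,β₂)-gadget for g i
    -- with fresh auxiliary variables C i (pairwise disjoint, disjoint from X and B)
    (C : Fin m → Type) (n : Fin m → ℕ)
    (u : ∀ i, Fin (n i) → ℚ)
    (q : ∀ i, Fin (n i) → (X → Bool) → (B → Bool) → (C i → Bool) → Bool)
    (hu : ∀ i j, 0 < u i j)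
    (hβ₂ : ∀ i, ∑ j, u i j = β₂)
    (hsat₂ : ∀ i (I : X → Bool) (J : B → Bool), g i I J = true →
      (∀ K : C i → Bool, ∑ j, (if q i j I J K then u i j else 0) ≤ α₂) ∧
      (∃ K : C i → Bool, ∑ j, (if q i j I J K then u i j else 0) = α₂))
    (hfal₂ : ∀ i (I : X → Bool) (J : B → Bool), g i I J = false →
      (∀ K : C i → Bool, ∑ j, (if q i j I J K then u i j else 0) ≤ α₂ - 1) ∧
      (∃ K : C i → Bool, ∑ j, (if q i j I J K then u i j else 0) = α₂ - 1)) :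
    -- then ⋃ i, (w i)·(Q i) is a strict (β₁(α₂−1)+α₁, β₁β₂)-gadget for f,
    -- with auxiliary variables B together with all the C i
    (∀ i j, 0 < w i * u i j) ∧
    (∑ i, ∑ j, w i * u i j = β₁ * β₂) ∧
    (∀ I : X → Bool, f I = true →
      (∀ (J : B → Bool) (K : ∀ i, C i → Bool),
        ∑ i, ∑ j, (if q i j I J (K i) then w i * u i j else 0)
          ≤ β₁ * (α₂ - 1) + α₁) ∧
      (∃ (J : B → Bool) (K : ∀ i, C i → Bool),
        ∑ i, ∑ j, (if q i j I J (K i) then w i * u i j else 0)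
          = β₁ * (α₂ - 1) + α₁)) ∧
    (∀ I : X → Bool, f I = false →
      (∀ (J : B → Bool) (K : ∀ i, C i → Bool),
        ∑ i, ∑ j, (if q i j I J (K i) then w i * u i j else 0)
          ≤ (β₁ * (α₂ - 1) + α₁) - 1) ∧
      (∃ (J : B → Bool) (K : ∀ i, C i → Bool),
        ∑ i, ∑ j, (if q i j I J (K i) then w i * u i j else 0)
          = (β₁ * (α₂ - 1) + α₁) - 1)) := by
  classical
  have key : ∀ (I : X → Bool) (J : B → Bool) (K : ∀ i, C i → Bool),
      ∑ i, ∑ j, (if q i j I J (K i) then w i * u i j else 0)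
        = ∑ i, w i * ∑ j, (if q i j I J (K i) then u i j else 0) := by
    intro I J K
    refine Finset.sum_congr rfl fun i _ => ?_
    rw [Finset.mul_sum]
    exact Finset.sum_congr rfl fun j _ => by split <;> simp
  have bound : ∀ (I : X → Bool) (J : B → Bool) (K : ∀ i, C i → Bool),
      ∑ i, ∑ j, (if q i j I J (K i) then w i * u i j else 0)
        ≤ β₁ * (α₂ - 1) + ∑ i, (if g i I J then w i else 0) := by
    intro I J K
    rw [key]
    have h1 : ∀ i ∈ Finset.univ,
        w i * ∑ j, (if q i j I J (K i) then u i j else 0)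
          ≤ w i * (α₂ - 1) + (if g i I J then w i else 0) := by
      intro i _
      by_cases h : g i I J
      · have h2 := (hsat₂ i I J h).1 (K i)
        have := mul_le_mul_of_nonneg_left h2 (hw i).le
        rw [if_pos h]
        linarith
      · have h2 := (hfal₂ i I J (by simpa using h)).1 (K i)
        have := mul_le_mul_of_nonneg_left h2 (hw i).le
        rw [if_neg h]
        linarith
    calc ∑ i, w i * ∑ j, (if q i j I J (K i) then u i j else 0)
        ≤ ∑ i, (w i * (α₂ - 1) + (if g i I J then w i else 0)) :=
          Finset.sum_le_sum h1
      _ = β₁ * (α₂ - 1) + ∑ i, (if g i I J then w i else 0) := by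
          rw [Finset.sum_add_distrib, ← Finset.sum_mul, hβ₁]
  have hexact : ∀ (I : X → Bool) (J : B → Bool),
      ∃ K : ∀ i, C i → Bool,
        ∑ i, ∑ j, (if q i j I J (K i) then w i * u i j else 0)
          = β₁ * (α₂ - 1) + ∑ i, (if g i I J then w i else 0) := by
    intro I J
    have h1 : ∀ i, ∃ K : C i → Bool,
        ∑ j, (if q i j I J K then u i j else 0)
          = (α₂ - 1) + (if g i I J then 1 else 0) := by
      intro i
      by_cases h : g i I J
      · obtain ⟨K, hK⟩ := (hsat₂ i I J h).2
        exact ⟨K, by rw [hK]; simp [h]⟩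
      · obtain ⟨K, hK⟩ := (hfal₂ i I J (by simpa using h)).2
        exact ⟨K, by rw [hK]; simp [h]⟩
    choose K hK using h1
    refine ⟨K, ?_⟩
    rw [key]
    calc ∑ i, w i * ∑ j, (if q i j I J (K i) then u i j else 0)
        = ∑ i, (w i * (α₂ - 1) + (if g i I J then w i else 0)) := by
          refine Finset.sum_congr rfl fun i _ => ?_
          rw [hK i]
          by_cases h : g i I J <;> simp [h] <;> ring
      _ = β₁ * (α₂ - 1) + ∑ i, (if g i I J then w i else 0) := by
          rw [Finset.sum_add_distrib, ← Finset.sum_mul, hβ₁]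
  refine ⟨fun i j => mul_pos (hw i) (hu i j), ?_, ?_, ?_⟩
  · rw [← hβ₁, Finset.sum_mul]
    refine Finset.sum_congr rfl fun i _ => ?_
    rw [← hβ₂ i, Finset.mul_sum]
  · intro I hI
    obtain ⟨hub, J, hJ⟩ := hsat₁ I hI
    constructor
    · intro J' K
      have := bound I J' K
      have := hub J'
      linarith
    · obtain ⟨K, hKval⟩ := hexact I J
      exact ⟨J, K, by rw [hKval, hJ]⟩
  · intro I hI
    obtain ⟨hub, J, hJ⟩ := hfal₁ I hI
    constructor
    · intro J' K
      have := bound I J' K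
      have := hub J'
      linarith
    · obtain ⟨K, hKval⟩ := hexact I J
      refine ⟨J, K, ?_⟩
      rw [hKval, hJ]; ring
end

section
/- Let P = {⟨w₁:f₁⟩, …, ⟨w_m:f_m⟩} be a weighted constraint problem over Boolean variables x⃗. Suppose each constraint f_i is translated by a strict (α,β)-gadget G_i for f_i (with the same α and β for all i, and with auxiliary variables pairwise disjoint for different i and disjoint from x⃗), and let P' = ⋃_{i=1}^m w_i·G_i (where w·G denotes G with every weight multiplied by w). Then Opt(P') = (α−1)·Weight(P) + Opt(P). -/
/-!
STATEMENT 1: If every constraint of `P = {⟨w i : f i⟩}` is translated by a strict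
(α,β)-gadget `G i` (with pairwise disjoint fresh auxiliary variables `B i`), and
`P' = ⋃ i, (w i) · G i`, then `Opt(P') = (α−1)·Weight(P) + Opt(P)`.
`Opt` is modeled via `IsGreatest` over the set of achievable values.
-/
theorem opt_of_strict_gadget_translation
    {X : Type} (m : ℕ) (w : Fin m → ℚ) (f : Fin m → (X → Bool) → Bool)
    (hw : ∀ i, 0 < w i)
    (α β : ℚ)
    (B : Fin m → Type) (n : Fin m → ℕ)
    (u : ∀ i, Fin (n i) → ℚ)
    (g : ∀ i, Fin (n i) → (X → Bool) → (B i → Bool) → Bool)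
    -- each G i = {⟨u i j : g i j⟩} is a strict (α,β)-gadget for f i
    (hu : ∀ i j, 0 < u i j)
    (hβ : ∀ i, ∑ j, u i j = β)
    (hsat : ∀ i (I : X → Bool), f i I = true →
      (∀ J : B i → Bool, ∑ j, (if g i j I J then u i j else 0) ≤ α) ∧
      (∃ J : B i → Bool, ∑ j, (if g i j I J then u i j else 0) = α))
    (hfal : ∀ i (I : X → Bool), f i I = false →
      (∀ J : B i → Bool, ∑ j, (if g i j I J then u i j else 0) ≤ α - 1) ∧
      (∃ J : B i → Bool, ∑ j, (if g i j I J then u i j else 0) = α - 1))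
    -- Opt(P) and Opt(P')
    (optP optP' : ℚ)
    (hOpt : IsGreatest {v : ℚ | ∃ I : X → Bool, v = ∑ i, (if f i I then w i else 0)} optP)
    (hOpt' : IsGreatest {v : ℚ | ∃ (I : X → Bool) (J : ∀ i, B i → Bool),
        v = ∑ i, ∑ j, (if g i j I (J i) then w i * u i j else 0)} optP') :
    optP' = (α - 1) * (∑ i, w i) + optP := by

  obtain ⟨⟨I0, hI0⟩, hub⟩ := hOpt
  obtain ⟨⟨I', J', hI'⟩, hub'⟩ := hOpt'
  have key : ∀ (I : X → Bool) (J : ∀ i, B i → Bool) (i : Fin m),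
      ∑ j, (if g i j I (J i) then w i * u i j else 0)
        = w i * ∑ j, (if g i j I (J i) then u i j else 0) := by
    intro I J i
    rw [Finset.mul_sum]
    exact Finset.sum_congr rfl fun j _ => by rw [mul_ite, mul_zero]
  have le1 : optP' ≤ (α - 1) * (∑ i, w i) + optP := by
    rw [hI']
    have hle : ∀ i ∈ Finset.univ, ∑ j, (if g i j I' (J' i) then w i * u i j else 0)
        ≤ (α - 1) * w i + (if f i I' then w i else 0) := by
      intro i _
      rw [key]
      rcases hb : f i I' with _ | _
      · have h := (hfal i I' hb).1 (J' i)
        simp only [Bool.false_eq_true, if_false]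
        nlinarith [hw i]
      · have h := (hsat i I' hb).1 (J' i)
        simp only [if_true]
        nlinarith [hw i]
    calc ∑ i, ∑ j, (if g i j I' (J' i) then w i * u i j else 0)
        ≤ ∑ i, ((α-1) * w i + (if f i I' then w i else 0)) := Finset.sum_le_sum hle
      _ = (α-1) * (∑ i, w i) + ∑ i, (if f i I' then w i else 0) := by
          rw [Finset.sum_add_distrib, Finset.mul_sum]
      _ ≤ (α-1) * (∑ i, w i) + optP := by gcongr; exact hub ⟨I', rfl⟩
  have ge1 : (α - 1) * (∑ i, w i) + optP ≤ optP' := by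
    have hJ : ∀ i : Fin m, ∃ J : B i → Bool, ∑ j, (if g i j I0 J then u i j else 0)
        = α - 1 + (if f i I0 then 1 else 0) := by
      intro i
      rcases hb : f i I0 with _ | _
      · obtain ⟨J, hJ⟩ := (hfal i I0 hb).2
        exact ⟨J, by rw [hJ]; simp⟩
      · obtain ⟨J, hJ⟩ := (hsat i I0 hb).2
        refine ⟨J, by rw [hJ]; simp⟩
    choose J hJ using hJ
    have hmem := hub' ⟨I0, J, rfl⟩
    refine le_trans (le_of_eq ?_) hmem
    rw [hI0]
    have : ∀ i ∈ Finset.univ, ∑ j, (if g i j I0 (J i) then w i * u i j else 0)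
        = (α - 1) * w i + (if f i I0 then w i else 0) := by
      intro i _
      rw [key, hJ i]
      rcases hb : f i I0 with _ | _ <;> simp <;> ring
    rw [Finset.sum_congr rfl this, Finset.sum_add_distrib, Finset.mul_sum]
  linarith
end

section
/- Let P = {⟨w₁:f₁⟩, …, ⟨w_m:f_m⟩} be a weighted constraint problem over Boolean variables x⃗. Suppose each constraint f_i is translated by a strict (α,β)-gadget G_i for f_i (with the same α and β for all i, and with auxiliary variables pairwise disjoint for different i and disjoint from x⃗), and let P' = ⋃_{i=1}^m w_i·G_i (where w·G denotes G with every weight multiplied by w). Then Cost(P') = (β−α)·Weight(P) + Cost(P). -/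
/-!
STATEMENT 2: If every constraint of `P = {⟨w i : f i⟩}` is translated by a strict
(α,β)-gadget `G i` (with pairwise disjoint fresh auxiliary variables `B i`), and
`P' = ⋃ i, (w i) · G i`, then `Cost(P') = (β−α)·Weight(P) + Cost(P)`.
`Cost` (the minimum total weight of falsified constraints) is modeled via `IsLeast`
over the set of achievable falsified weights.
-/
theorem cost_of_strict_gadget_translation
    {X : Type} (m : ℕ) (w : Fin m → ℚ) (f : Fin m → (X → Bool) → Bool)
    (hw : ∀ i, 0 < w i)
    (α β : ℚ)
    (B : Fin m → Type) (n : Fin m → ℕ)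
    (u : ∀ i, Fin (n i) → ℚ)
    (g : ∀ i, Fin (n i) → (X → Bool) → (B i → Bool) → Bool)
    -- each G i = {⟨u i j : g i j⟩} is a strict (α,β)-gadget for f i
    (hu : ∀ i j, 0 < u i j)
    (hβ : ∀ i, ∑ j, u i j = β)
    (hsat : ∀ i (I : X → Bool), f i I = true →
      (∀ J : B i → Bool, ∑ j, (if g i j I J then u i j else 0) ≤ α) ∧
      (∃ J : B i → Bool, ∑ j, (if g i j I J then u i j else 0) = α))
    (hfal : ∀ i (I : X → Bool), f i I = false →
      (∀ J : B i → Bool, ∑ j, (if g i j I J then u i j else 0) ≤ α - 1) ∧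
      (∃ J : B i → Bool, ∑ j, (if g i j I J then u i j else 0) = α - 1))
    -- Cost(P) and Cost(P')
    (costP costP' : ℚ)
    (hCost : IsLeast {v : ℚ | ∃ I : X → Bool, v = ∑ i, (if f i I then 0 else w i)} costP)
    (hCost' : IsLeast {v : ℚ | ∃ (I : X → Bool) (J : ∀ i, B i → Bool),
        v = ∑ i, ∑ j, (if g i j I (J i) then 0 else w i * u i j)} costP') :
    costP' = (β - α) * (∑ i, w i) + costP := by
  classical
  have key : ∀ (i : Fin m) (I : X → Bool) (J : B i → Bool),
      ∑ j, (if g i j I J then (0:ℚ) else w i * u i j)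
        = w i * (β - ∑ j, (if g i j I J then u i j else 0)) := by
    intro i I J
    rw [mul_sub, ← hβ i, Finset.mul_sum, Finset.mul_sum, ← Finset.sum_sub_distrib]
    refine Finset.sum_congr rfl fun j _ => ?_
    by_cases h : g i j I J <;> simp [h]
  have hsum : ∀ I : X → Bool,
      ∑ i, (w i * (β - α) + (if f i I then (0:ℚ) else w i))
        = (β - α) * (∑ i, w i) + ∑ i, (if f i I then (0:ℚ) else w i) := by
    intro I
    rw [Finset.sum_add_distrib]
    congr 1
    rw [Finset.mul_sum]
    exact Finset.sum_congr rfl fun i _ => mul_comm _ _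
  have hle : (β - α) * (∑ i, w i) + costP ≤ costP' := by
    obtain ⟨I, J, hIJ⟩ := hCost'.1
    have h1 : ∀ i, w i * (β - α) + (if f i I then (0:ℚ) else w i)
        ≤ ∑ j, (if g i j I (J i) then (0:ℚ) else w i * u i j) := by
      intro i
      rw [key]
      by_cases h : f i I
      · have hσ := (hsat i I h).1 (J i)
        simp only [h, if_true, add_zero]
        nlinarith [hw i]
      · have hfi : f i I = false := Bool.eq_false_iff.mpr h
        have hσ := (hfal i I hfi).1 (J i)
        simp only [hfi, Bool.false_eq_true, if_false]
        nlinarith [hw i]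
    have h2 : ∑ i, (w i * (β - α) + (if f i I then (0:ℚ) else w i)) ≤ costP' := by
      rw [hIJ]; exact Finset.sum_le_sum fun i _ => h1 i
    have h3 : costP ≤ ∑ i, (if f i I then (0:ℚ) else w i) := hCost.2 ⟨I, rfl⟩
    have h4 := hsum I
    linarith
  have hge : costP' ≤ (β - α) * (∑ i, w i) + costP := by
    obtain ⟨I, hI⟩ := hCost.1
    set J : ∀ i, B i → Bool := fun i =>
      if h : f i I = true then (hsat i I h).2.choose
      else (hfal i I (Bool.eq_false_iff.mpr h)).2.choose with hJ
    have hterm : ∀ i, ∑ j, (if g i j I (J i) then (0:ℚ) else w i * u i j)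
        = w i * (β - α) + (if f i I then (0:ℚ) else w i) := by
      intro i
      rw [key]
      by_cases h : f i I = true
      · have hJi : J i = (hsat i I h).2.choose := by simp [hJ, h]
        rw [hJi, (hsat i I h).2.choose_spec]
        simp [h]
      · have hfi : f i I = false := Bool.eq_false_iff.mpr h
        have hJi : J i = (hfal i I (Bool.eq_false_iff.mpr h)).2.choose := by
          simp [hJ, h]
        rw [hJi, (hfal i I (Bool.eq_false_iff.mpr h)).2.choose_spec]
        simp only [hfi, Bool.false_eq_true, if_false]
        ring
    have hval : ∑ i, ∑ j, (if g i j I (J i) then (0:ℚ) else w i * u i j)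
        = (β - α) * (∑ i, w i) + costP := by
      rw [Finset.sum_congr rfl fun i _ => hterm i, hsum I, ← hI]
    have := hCost'.2 ⟨I, J, rfl⟩
    linarith [hval ▸ this]
  linarith
end

section
/- Let P = {f₁, …, f_m} be a set of Boolean constraints over variables x⃗, each regarded as having weight 1. Suppose each constraint f_i is translated by a strict (α,β)-gadget G_i for f_i (with the same α and β for all i, and with auxiliary variables pairwise disjoint for different i and disjoint from x⃗), and let P' = ⋃_{i=1}^m G_i. Then P is unsatisfiable (no assignment of x⃗ satisfies all of f₁,…,f_m simultaneously) if and only if Cost(P') ≥ (β−α)·m + 1. -/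
/-!
STATEMENT 3: Let `P = {f 0, …, f (m-1)}` be a set of Boolean constraints, each of weight 1,
each translated by a strict (α,β)-gadget `G i` (with pairwise disjoint fresh auxiliary
variables `B i`), and `P' = ⋃ i, G i`. Then `P` is unsatisfiable iff
`Cost(P') ≥ (β−α)·m + 1`, where `Cost(P')` (the minimum total weight of falsified
constraints of `P'`) is modeled via `IsLeast` over the achievable falsified weights.
-/
theorem unsat_iff_cost_of_gadget_translation
    {X : Type} (m : ℕ) (f : Fin m → (X → Bool) → Bool)
    (α β : ℚ)
    (B : Fin m → Type) (n : Fin m → ℕ)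
    (u : ∀ i, Fin (n i) → ℚ)
    (g : ∀ i, Fin (n i) → (X → Bool) → (B i → Bool) → Bool)
    -- each G i = {⟨u i j : g i j⟩} is a strict (α,β)-gadget for f i
    (hu : ∀ i j, 0 < u i j)
    (hβ : ∀ i, ∑ j, u i j = β)
    (hsat : ∀ i (I : X → Bool), f i I = true →
      (∀ J : B i → Bool, ∑ j, (if g i j I J then u i j else 0) ≤ α) ∧
      (∃ J : B i → Bool, ∑ j, (if g i j I J then u i j else 0) = α))
    (hfal : ∀ i (I : X → Bool), f i I = false →
      (∀ J : B i → Bool, ∑ j, (if g i j I J then u i j else 0) ≤ α - 1) ∧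
      (∃ J : B i → Bool, ∑ j, (if g i j I J then u i j else 0) = α - 1))
    -- Cost(P')
    (costP' : ℚ)
    (hCost' : IsLeast {v : ℚ | ∃ (I : X → Bool) (J : ∀ i, B i → Bool),
        v = ∑ i, ∑ j, (if g i j I (J i) then 0 else u i j)} costP') :
    (¬ ∃ I : X → Bool, ∀ i, f i I = true) ↔ (β - α) * m + 1 ≤ costP' := by

  have key : ∀ (i : Fin m) (I : X → Bool) (J : B i → Bool),
      ∑ j, (if g i j I J then (0:ℚ) else u i j) = β - ∑ j, (if g i j I J then u i j else 0) := by
    intro i I J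
    rw [← hβ i, ← Finset.sum_sub_distrib]
    apply Finset.sum_congr rfl
    intro j _
    by_cases h : g i j I J <;> simp [h]
  obtain ⟨⟨I₀, J₀, hv₀⟩, hlb⟩ := hCost'
  constructor
  · intro hunsat
    push_neg at hunsat
    obtain ⟨i₀, hi₀⟩ := hunsat I₀
    have hi₀' : f i₀ I₀ = false := by simpa using hi₀
    set S : Fin m → ℚ := fun i => ∑ j, (if g i j I₀ (J₀ i) then u i j else 0) with hS
    have h1 : ∀ i, S i ≤ α := by
      intro i
      cases h : f i I₀ with
      | false => have := (hfal i I₀ h).1 (J₀ i); simp only [hS]; linarith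
      | true => exact (hsat i I₀ h).1 (J₀ i)
    have h2 : S i₀ ≤ α - 1 := (hfal i₀ I₀ hi₀').1 (J₀ i₀)
    have hsum : (1:ℚ) ≤ ∑ i, (α - S i) :=
      le_trans (by linarith) (Finset.single_le_sum (fun i _ => by have := h1 i; linarith)
        (Finset.mem_univ i₀))
    have e1 : costP' = ∑ i, (β - S i) := by
      rw [hv₀]; exact Finset.sum_congr rfl fun i _ => key i I₀ (J₀ i)
    have e2 : ∑ i, (β - S i) = m * β - ∑ i, S i := by
      rw [Finset.sum_sub_distrib, Finset.sum_const, Finset.card_univ, Fintype.card_fin,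
        nsmul_eq_mul]
    have e3 : ∑ i, (α - S i) = m * α - ∑ i, S i := by
      rw [Finset.sum_sub_distrib, Finset.sum_const, Finset.card_univ, Fintype.card_fin,
        nsmul_eq_mul]
    rw [e1, e2]
    rw [e3] at hsum
    linarith
  · intro h ⟨I, hI⟩
    choose J hJ using fun i => (hsat i I (hI i)).2
    have hmem : ((β - α) * m : ℚ) ∈ {v : ℚ | ∃ (I : X → Bool) (J : ∀ i, B i → Bool),
        v = ∑ i, ∑ j, (if g i j I (J i) then 0 else u i j)} := by
      refine ⟨I, J, ?_⟩
      have : ∀ i : Fin m, ∑ j, (if g i j I (J i) then (0:ℚ) else u i j) = β - α := by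
        intro i; rw [key i I (J i), hJ i]
      rw [Finset.sum_congr rfl fun i _ => this i, Finset.sum_const, Finset.card_univ,
        Fintype.card_fin, nsmul_eq_mul]
      ring
    have := hlb hmem
    linarith
end

section
/- Let k ≥ 2 and consider the 3(k−1) constraints of T⁰(x₁ ∨ ⋯ ∨ x_k, b_{k−1}) (each of weight 1/2). For any assignment I : {x₁,…,x_k} → {0,1}, the extension I' of I defined by I'(b_i) = I(x_{i+1}) for i = 1,…,k−1 satisfies exactly 2(k−1) of the constraints, and no assignment extending I (indeed, no assignment at all) satisfies more than 2(k−1) of the constraints. -/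
open Finset

/-- Number of satisfied constraints among the triangle {p ⊕ q = 1, p ⊕ r = 0, r ⊕ q = 0}. -/
def triCount (p q r : Bool) : ℕ :=
  (if xor p q = true then 1 else 0) +
  (if xor p r = false then 1 else 0) +
  (if xor r q = false then 1 else 0)

/-- Number of constraints of T⁰(x₁ ∨ ⋯ ∨ x_k, b_{k−1}) satisfied by the assignment
given by `x` (values of x₁,…,x_k) and `b` (values of b₁,…,b_{k−1}), all 1-indexed.
The j-th triangle (j = 1,…,k−1) is {p_j ⊕ x_{j+1} = 1, p_j ⊕ b_j = 0, b_j ⊕ x_{j+1} = 0}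
where p₁ = x₁ and p_j = b_{j−1} for j ≥ 2; each constraint has weight 1/2. -/
def T0count (k : ℕ) (x b : ℕ → Bool) : ℕ :=
  ∑ j ∈ Finset.Icc 1 (k - 1), triCount (if j = 1 then x 1 else b (j - 1)) (x (j + 1)) (b j)

/-!
STATEMENT 11: For k ≥ 2, T⁰(x₁ ∨ ⋯ ∨ x_k, b_{k−1}) has 3(k−1) constraints; for any
assignment I of x₁,…,x_k, the extension I'(b_i) = I(x_{i+1}) (i = 1,…,k−1) satisfies
exactly 2(k−1) of them, and no assignment at all satisfies more than 2(k−1) of them.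
-/
theorem T0_optimal_extension (k : ℕ) (hk : 2 ≤ k) :
    (∑ j ∈ Finset.Icc 1 (k - 1), 3 = 3 * (k - 1)) ∧
    (∀ x : ℕ → Bool, T0count k x (fun i => x (i + 1)) = 2 * (k - 1)) ∧
    (∀ x b : ℕ → Bool, T0count k x b ≤ 2 * (k - 1)) := by
  have h2 : ∀ p q : Bool, triCount p q q = 2 := by decide
  have hle : ∀ p q r : Bool, triCount p q r ≤ 2 := by decide
  have hcard : (Finset.Icc 1 (k - 1)).card = k - 1 := by
    simp [Nat.card_Icc]
  refine ⟨?_, ?_, ?_⟩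
  · rw [Finset.sum_const, hcard, smul_eq_mul, Nat.mul_comm]
  · intro x
    unfold T0count
    have : ∀ j ∈ Finset.Icc 1 (k - 1),
        triCount (if j = 1 then x 1 else x (j - 1 + 1)) (x (j + 1)) (x (j + 1)) = 2 := by
      intro j hj
      rcases eq_or_ne j 1 with h | h
      · simp [h, h2]
      · have h1 : 1 ≤ j := (Finset.mem_Icc.mp hj).1
        have : j - 1 + 1 = j := Nat.succ_pred_eq_of_pos h1
        simp [h, this, h2]
    rw [Finset.sum_congr rfl this, Finset.sum_const, hcard, smul_eq_mul, Nat.mul_comm]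
  · intro x b
    unfold T0count
    calc ∑ j ∈ Finset.Icc 1 (k - 1), triCount (if j = 1 then x 1 else b (j - 1)) (x (j + 1)) (b j)
        ≤ ∑ j ∈ Finset.Icc 1 (k - 1), 2 := Finset.sum_le_sum fun j _ => hle _ _ _
      _ = 2 * (k - 1) := by rw [Finset.sum_const, hcard, smul_eq_mul, Nat.mul_comm]
end

section
/- Let k ≥ 2 and consider the 3(k−1) constraints of T⁰(x₁ ∨ ⋯ ∨ x_k, b_{k−1}) (each of weight 1/2). For any assignment I : {x₁,…,x_k, b_{k−1}} → {0,1} with I(b_{k−1}) = 1, the extension I' of I defined, for i = 1,…,k−2, by I'(b_i) = 1 if I(x_{i+2}) = ⋯ = I(x_k) = 0 and I'(b_i) = I(x_{i+1}) otherwise, maximizes the number of satisfied constraints among all extensions of I to b₁,…,b_{k−2}; this maximum equals 2(k−2) if I(x₁) = ⋯ = I(x_k) = 0, and equals 2(k−1) otherwise. -/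
open Finset

/-- The extension of an assignment `x` of x₁,…,x_k (with b_{k−1} fixed to 1) defined by
b_i = 1 if x_{i+2} = ⋯ = x_k = 0 and b_i = x_{i+1} otherwise, for i = 1,…,k−2. -/
def T0ext (k : ℕ) (x : ℕ → Bool) : ℕ → Bool := fun i =>
  if i = k - 1 then true
  else if ∀ j ∈ Finset.Icc (i + 2) k, x j = false then true
  else x (i + 1)

/-!
STATEMENT 12: For k ≥ 2 and any assignment I of x₁,…,x_k, b_{k−1} with I(b_{k−1}) = 1,
the extension I' with I'(b_i) = 1 if I(x_{i+2}) = ⋯ = I(x_k) = 0 and I'(b_i) = I(x_{i+1})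
otherwise (i = 1,…,k−2) maximizes the number of satisfied constraints of
T⁰(x₁ ∨ ⋯ ∨ x_k, b_{k−1}) among all extensions of I to b₁,…,b_{k−2}; this maximum is
2(k−2) if I(x₁) = ⋯ = I(x_k) = 0 and 2(k−1) otherwise.
-/
/-- Chain count: head `p`, `n` triangles, q-values `x 0, …, x (n-1)`,
b-values `b 0, …, b (n-1)`. -/
def fCnt : Bool → ℕ → (ℕ → Bool) → (ℕ → Bool) → ℕ
  | _, 0, _, _ => 0
  | p, n+1, x, b => triCount p (x 0) (b 0) + fCnt (b 0) n (fun i => x (i+1)) (fun i => b (i+1))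

def eExt (n : ℕ) (x : ℕ → Bool) : ℕ → Bool := fun i =>
  if i = n - 1 then true
  else if ∀ j < n, i + 1 ≤ j → x j = false then true
  else x i

def Fval (p : Bool) (n : ℕ) (x : ℕ → Bool) : ℕ :=
  if p = false ∧ ∀ j < n, x j = false then 2 * (n - 1) else 2 * n

lemma triCount_le (p q r : Bool) : triCount p q r ≤ 2 := by
  cases p <;> cases q <;> cases r <;> decide

lemma Fval_le (p : Bool) (n : ℕ) (x : ℕ → Bool) : Fval p n x ≤ 2 * n := by
  unfold Fval; split <;> omega

lemma fCnt_congr : ∀ (n : ℕ) (p : Bool) (x b x' b' : ℕ → Bool),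
    (∀ i < n, x i = x' i) → (∀ i < n, b i = b' i) →
    fCnt p n x b = fCnt p n x' b'
  | 0, _, _, _, _, _, _, _ => rfl
  | n+1, p, x, b, x', b', hx, hb => by
    simp only [fCnt]
    rw [hx 0 (by omega), hb 0 (by omega),
      fCnt_congr n _ _ _ _ _ (fun i hi => hx (i+1) (by omega))
        (fun i hi => hb (i+1) (by omega))]

lemma fCnt_main : ∀ n, 1 ≤ n → ∀ (p : Bool) (x : ℕ → Bool),
    (∀ b : ℕ → Bool, b (n-1) = true → fCnt p n x b ≤ Fval p n x) ∧
    fCnt p n x (eExt n x) = Fval p n x := by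
  intro n hn
  induction n, hn using Nat.le_induction with
  | base =>
    intro p x
    have hone : Fval p 1 x = (if p = false ∧ x 0 = false then 0 else 2) := by
      unfold Fval
      simp [Nat.lt_one_iff]
    constructor
    · intro b hb
      have hb0 : b 0 = true := hb
      show triCount p (x 0) (b 0) + fCnt (b 0) 0 _ _ ≤ Fval p 1 x
      rw [hb0, hone]
      show triCount p (x 0) true + 0 ≤ _
      cases p <;> cases hx0 : x 0 <;> simp [triCount, hx0]
    · have he : eExt 1 x 0 = true := by unfold eExt; simp
      show triCount p (x 0) (eExt 1 x 0) + fCnt (eExt 1 x 0) 0 _ _ = Fval p 1 x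
      rw [he, hone]
      show triCount p (x 0) true + 0 = _
      cases p <;> cases hx0 : x 0 <;> simp [triCount, hx0]
  | succ n hn ih =>
    intro p x
    constructor
    · intro b hb
      have hb' : (fun i => b (i+1)) (n-1) = true := by
        show b (n-1+1) = true
        rw [show n-1+1 = n by omega]
        exact hb
      have htail := (ih (b 0) (fun i => x (i+1))).1 (fun i => b (i+1)) hb'
      have htri : triCount p (x 0) (b 0) ≤ 2 := triCount_le _ _ _
      show triCount p (x 0) (b 0) + fCnt (b 0) n (fun i => x (i+1)) (fun i => b (i+1))
          ≤ Fval p (n+1) x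
      by_cases hsp : p = false ∧ ∀ j < n + 1, x j = false
      · obtain ⟨hp, hall⟩ := hsp
        subst hp
        have hx0 : x 0 = false := hall 0 (by omega)
        have hall' : ∀ j < n, (fun i => x (i+1)) j = false := fun j hj => hall (j+1) (by omega)
        have hF : Fval false (n+1) x = 2 * n := by
          unfold Fval
          rw [if_pos ⟨rfl, hall⟩]
          omega
        rw [hF]
        cases hb0 : b 0 with
        | true =>
          have h1 : triCount false (x 0) true = 0 := by rw [hx0]; decide
          have h2 : Fval true n (fun i => x (i+1)) = 2 * n := by
            unfold Fval; rw [if_neg (by simp)]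
          rw [hb0, h2] at htail
          omega
        | false =>
          have h1 : triCount false (x 0) false = 2 := by rw [hx0]; decide
          have h2 : Fval false n (fun i => x (i+1)) = 2 * (n-1) := by
            unfold Fval; rw [if_pos ⟨rfl, hall'⟩]
          rw [hb0, h2] at htail
          omega
      · have hF : Fval p (n+1) x = 2 * (n+1) := by
          unfold Fval; rw [if_neg hsp]
        have h2 : Fval (b 0) n (fun i => x (i+1)) ≤ 2 * n := Fval_le _ _ _
        omega
    · -- value of the extension
      have e0def : eExt (n+1) x 0
          = (if ∀ j < n, x (j+1) = false then true else x 0) := by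
        unfold eExt
        rw [if_neg (by omega : ¬ (0 : ℕ) = (n+1) - 1)]
        have hc : (∀ j < n + 1, 0 + 1 ≤ j → x j = false) ↔ (∀ j < n, x (j+1) = false) := by
          constructor
          · intro h j hj; exact h (j+1) (by omega) (by omega)
          · intro h j hj1 hj2
            have := h (j-1) (by omega)
            rwa [show j-1+1 = j by omega] at this
        by_cases h2 : ∀ j < n, x (j+1) = false
        · rw [if_pos (hc.mpr h2), if_pos h2]
        · rw [if_neg (fun hh => h2 (hc.mp hh)), if_neg h2]
      have hshift : ∀ i < n, eExt (n+1) x (i+1) = eExt n (fun m => x (m+1)) i := by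
        intro i hi
        unfold eExt
        by_cases hin : i = n - 1
        · rw [if_pos (by omega : i + 1 = (n+1)-1), if_pos hin]
        · rw [if_neg (by omega : ¬ i + 1 = (n+1)-1), if_neg hin]
          have hc : (∀ j < n + 1, i + 1 + 1 ≤ j → x j = false)
              ↔ (∀ j < n, i + 1 ≤ j → x (j+1) = false) := by
            constructor
            · intro h j hj hij; exact h (j+1) (by omega) (by omega)
            · intro h j hj hij
              have := h (j-1) (by omega) (by omega)
              rwa [show j-1+1 = j by omega] at this
          by_cases h2 : ∀ j < n, i + 1 ≤ j → x (j+1) = false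
          · rw [if_pos (hc.mpr h2), if_pos h2]
          · rw [if_neg (fun hh => h2 (hc.mp hh)), if_neg h2]
      have hval := (ih (eExt (n+1) x 0) (fun i => x (i+1))).2
      have hcongr : fCnt (eExt (n+1) x 0) n (fun i => x (i+1)) (fun i => eExt (n+1) x (i+1))
          = fCnt (eExt (n+1) x 0) n (fun i => x (i+1)) (eExt n (fun i => x (i+1))) :=
        fCnt_congr n _ _ _ _ _ (fun i _ => rfl) hshift
      show triCount p (x 0) (eExt (n+1) x 0)
          + fCnt (eExt (n+1) x 0) n (fun i => x (i+1)) (fun i => eExt (n+1) x (i+1))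
          = Fval p (n+1) x
      rw [hcongr, hval]
      by_cases hc : ∀ j < n, x (j+1) = false
      · have he0 : eExt (n+1) x 0 = true := by rw [e0def, if_pos hc]
        rw [he0]
        have h2 : Fval true n (fun i => x (i+1)) = 2 * n := by
          unfold Fval; rw [if_neg (by simp)]
        rw [h2]
        cases p with
        | false =>
          cases hx0 : x 0 with
          | false =>
            have hall : ∀ j < n + 1, x j = false := by
              intro j hj
              rcases Nat.eq_zero_or_pos j with h | h
              · rw [h]; exact hx0
              · have := hc (j-1) (by omega)
                rwa [show j-1+1 = j by omega] at this
            have h3 : Fval false (n+1) x = 2 * n := by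
              unfold Fval; rw [if_pos ⟨rfl, hall⟩]; omega
            rw [h3]
            have h4 : triCount false false true = 0 := by decide
            omega
          | true =>
            have h3 : Fval false (n+1) x = 2 * (n+1) := by
              unfold Fval
              rw [if_neg (by rintro ⟨-, hall⟩; rw [hall 0 (by omega)] at hx0; cases hx0)]
            have h4 : triCount false true true = 2 := by decide
            omega
        | true =>
          have h3 : Fval true (n+1) x = 2 * (n+1) := by
            unfold Fval; rw [if_neg (by simp)]
          rw [h3]
          have : triCount true (x 0) true = 2 := by cases hx0 : x 0 <;> decide
          omega
      · have he0 : eExt (n+1) x 0 = x 0 := by rw [e0def, if_neg hc]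
        rw [he0]
        have h2 : Fval (x 0) n (fun i => x (i+1)) = 2 * n := by
          unfold Fval; rw [if_neg (by rintro ⟨-, h⟩; exact hc h)]
        have h3 : Fval p (n+1) x = 2 * (n+1) := by
          unfold Fval
          rw [if_neg (by rintro ⟨-, hall⟩; exact hc (fun j hj => hall (j+1) (by omega)))]
        rw [h2, h3]
        have : triCount p (x 0) (x 0) = 2 := by cases p <;> cases hx0 : x 0 <;> simp [triCount, hx0]
        omega

lemma fCnt_eq_sum : ∀ (n : ℕ) (p : Bool) (x b : ℕ → Bool),
    fCnt p n x b = ∑ j ∈ Finset.range n, triCount (if j = 0 then p else b (j-1)) (x j) (b j)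
  | 0, _, _, _ => by simp [fCnt]
  | n+1, p, x, b => by
    rw [Finset.sum_range_succ']
    show triCount p (x 0) (b 0) + fCnt (b 0) n (fun i => x (i+1)) (fun i => b (i+1)) = _
    rw [fCnt_eq_sum n (b 0) (fun i => x (i+1)) (fun i => b (i+1))]
    rw [Nat.add_comm]
    congr 1
    apply Finset.sum_congr rfl
    intro j _
    by_cases hj0 : j = 0
    · subst hj0; simp
    · simp only [hj0, if_false, if_neg (by omega : ¬ j + 1 = 0)]
      rw [show j - 1 + 1 = j by omega]
      simp

lemma T0count_eq (k : ℕ) (x b : ℕ → Bool) :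
    T0count k x b = fCnt (x 1) (k-1) (fun i => x (i+2)) (fun i => b (i+1)) := by
  rw [T0count, fCnt_eq_sum, ← Finset.Ico_add_one_right_eq_Icc, Finset.sum_Ico_eq_sum_range]
  rw [show k - 1 + 1 - 1 = k - 1 by omega]
  apply Finset.sum_congr rfl
  intro i _
  by_cases h0 : i = 0
  · subst h0; norm_num
  · rw [if_neg (by omega : ¬ 1 + i = 1), if_neg h0]
    rw [show 1 + i - 1 = i by omega, show i - 1 + 1 = i by omega,
      show 1 + i + 1 = i + 2 by omega, show 1 + i = i + 1 by omega]

lemma ext_shift (k : ℕ) (hk : 2 ≤ k) (x : ℕ → Bool) :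
    ∀ i < k - 1, T0ext k x (i+1) = eExt (k-1) (fun m => x (m+2)) i := by
  intro i hi
  unfold T0ext eExt
  by_cases hin : i + 1 = k - 1
  · rw [if_pos hin, if_pos (by omega : i = k - 1 - 1)]
  · rw [if_neg hin, if_neg (by omega : ¬ i = k - 1 - 1)]
    have hc : (∀ j ∈ Finset.Icc (i+1+2) k, x j = false)
        ↔ (∀ j < k - 1, i + 1 ≤ j → x (j+2) = false) := by
      simp only [Finset.mem_Icc]
      constructor
      · intro h j hj hij; exact h (j+2) ⟨by omega, by omega⟩
      · intro h j hj
        have := h (j-2) (by omega) (by omega)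
        rwa [show j-2+2 = j by omega] at this
    by_cases h2 : ∀ j < k - 1, i + 1 ≤ j → x (j+2) = false
    · rw [if_pos (hc.mpr h2), if_pos h2]
    · rw [if_neg (fun hh => h2 (hc.mp hh)), if_neg h2]

theorem T0_extension_with_root_true (k : ℕ) (hk : 2 ≤ k) (x : ℕ → Bool) :
    (∀ b : ℕ → Bool, b (k - 1) = true →
      T0count k x b ≤ T0count k x (T0ext k x)) ∧
    T0count k x (T0ext k x) =
      (if ∀ i ∈ Finset.Icc 1 k, x i = false then 2 * (k - 2) else 2 * (k - 1)) := by
  have hcongr : fCnt (x 1) (k-1) (fun i => x (i+2)) (fun i => T0ext k x (i+1))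
      = fCnt (x 1) (k-1) (fun i => x (i+2)) (eExt (k-1) (fun m => x (m+2))) :=
    fCnt_congr _ _ _ _ _ _ (fun i _ => rfl) (ext_shift k hk x)
  have hmain := fCnt_main (k-1) (by omega) (x 1) (fun i => x (i+2))
  constructor
  · intro b hb
    rw [T0count_eq, T0count_eq, hcongr, hmain.2]
    refine hmain.1 (fun i => b (i+1)) ?_
    show b (k-1-1+1) = true
    rw [show k-1-1+1 = k-1 by omega]
    exact hb
  · rw [T0count_eq, hcongr, hmain.2]
    have hzero : (x 1 = false ∧ ∀ j < k - 1, (fun m => x (m+2)) j = false)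
        ↔ (∀ i ∈ Finset.Icc 1 k, x i = false) := by
      simp only [Finset.mem_Icc]
      constructor
      · rintro ⟨h1, h2⟩ i ⟨hi1, hi2⟩
        rcases Nat.eq_or_lt_of_le hi1 with h | h
        · rw [← h]; exact h1
        · have := h2 (i-2) (by omega)
          simpa [show i-2+2 = i by omega] using this
      · intro h
        exact ⟨h 1 ⟨le_refl 1, by omega⟩, fun j hj => h (j+2) ⟨by omega, by omega⟩⟩
    unfold Fval
    by_cases hz : ∀ i ∈ Finset.Icc 1 k, x i = false
    · rw [if_pos (hzero.mpr hz), if_pos hz]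
      omega
    · rw [if_neg (fun hh => hz (hzero.mp hh)), if_neg hz]
end

section
/- Let k ≥ 2 and let T be a clause tree for x₁,…,x_k. Any assignment I : {x₁,…,x_k} → {0,1} can be extended to an optimal assignment of Tᵗ(T) satisfying exactly 2(k−1) of its constraints, by setting, for every internal node v, I(b_v) equal to the OR of the values of the leaves below v; in particular this optimal extension assigns the root's variable the value I(x₁ ∨ ⋯ ∨ x_k). -/
/-- A (candidate) clause tree: a full binary tree whose leaves are labeled by (indices of)
the clause variables x_i and whose internal nodes carry (indices of) auxiliary variables
b_v.  Leaf labels are interpreted by an assignment `x : ℕ → Bool` and internal labels by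
an assignment `b : ℕ → Bool`. -/
inductive ClauseTree : Type
  | leaf (i : ℕ)
  | node (v : ℕ) (l r : ClauseTree)

namespace ClauseTree

/-- Labels of the leaves, left to right. -/
def leaves : ClauseTree → List ℕ
  | leaf i => [i]
  | node _ l r => leaves l ++ leaves r

/-- Labels of the internal nodes. -/
def internals : ClauseTree → List ℕ
  | leaf _ => []
  | node v l r => v :: (internals l ++ internals r)

/-- `t` is a clause tree for x₁,…,x_k: its leaves are labeled bijectively by 1,…,k and
its internal auxiliary variables are pairwise distinct (they are fresh by construction,
living in a namespace separate from the leaf labels). -/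
def IsClauseTree (k : ℕ) (t : ClauseTree) : Prop :=
  t.leaves.Nodup ∧ (∀ i, i ∈ t.leaves ↔ i ∈ Finset.Icc 1 k) ∧ t.internals.Nodup

/-- var(v) of the root of `t`: the value of the leaf variable if `t` is a leaf, and the
value of the auxiliary variable b_v if the root is an internal node v. -/
def rootVar (x b : ℕ → Bool) : ClauseTree → Bool
  | leaf i => x i
  | node v _ _ => b v

/-- Number of satisfied constraints among the triangle {p ⊕ q = 1, p ⊕ r = 0, q ⊕ r = 0}. -/
def triCount (p q r : Bool) : ℕ :=
  (if xor p q = true then 1 else 0) +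
  (if xor p r = false then 1 else 0) +
  (if xor q r = false then 1 else 0)

/-- Number of constraints of Tᵗ(t) satisfied by the assignment given by `x` and `b`:
for every internal node v with children u, w, the triangle
{var(u) ⊕ var(w) = 1, var(u) ⊕ b_v = 0, var(w) ⊕ b_v = 0} (each of weight 1/2). -/
def countSat (x b : ℕ → Bool) : ClauseTree → ℕ
  | leaf _ => 0
  | node v l r =>
      countSat x b l + countSat x b r + triCount (rootVar x b l) (rootVar x b r) (b v)

/-- Total number of constraints of Tᵗ(t). -/
def numConstraints : ClauseTree → ℕ
  | leaf _ => 0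
  | node _ l r => numConstraints l + numConstraints r + 3

/-- The OR of the values of the leaves below (the root of) `t`. -/
def orLeaves (x : ℕ → Bool) : ClauseTree → Bool
  | leaf i => x i
  | node _ l r => orLeaves x l || orLeaves x r

/-- The assignment `b` of the internal auxiliary variables agrees with the canonical
extension of `x`: every internal node v gets the OR of the values of the leaves below v. -/
def Agrees (x b : ℕ → Bool) : ClauseTree → Prop
  | leaf _ => True
  | node v l r => b v = orLeaves x (node v l r) ∧ Agrees x b l ∧ Agrees x b r

end ClauseTree

/-!
Every triangle {p ⊕ q = 1, p ⊕ r = 0, q ⊕ r = 0} has at most two of its three constraints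
satisfied, since the three XORs p ⊕ q, p ⊕ r, q ⊕ r sum to 0; setting r = p ∨ q attains two.
A full binary tree with k leaves has k − 1 internal nodes, so the OR-extension satisfies
2(k − 1) constraints, which is the maximum.
-/

namespace ClauseTree

def orBelow (x : ℕ → Bool) : ClauseTree → ℕ → Bool
  | leaf _, _ => false
  | node w l r, v =>
      if v = w then orLeaves x (node w l r)
      else if v ∈ l.internals then orBelow x l v else orBelow x r v

theorem Agrees.congr {x b b' : ℕ → Bool} {t : ClauseTree}
    (h : Agrees x b t) (hb : ∀ v ∈ t.internals, b' v = b v) : Agrees x b' t := by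
  induction t with
  | leaf _ => trivial
  | node v l r ihl ihr =>
    refine ⟨(hb v (by simp [internals])).trans h.1, ihl h.2.1 ?_, ihr h.2.2 ?_⟩ <;>
      exact fun u hu => hb u (by simp [internals, hu])

theorem agrees_orBelow (x : ℕ → Bool) {t : ClauseTree} (ht : t.internals.Nodup) :
    Agrees x (orBelow x t) t := by
  induction t with
  | leaf _ => trivial
  | node v l r ihl ihr =>
    simp only [internals, List.nodup_cons, List.mem_append, not_or, List.nodup_append] at ht
    obtain ⟨⟨hvl, hvr⟩, hl, hr, hdisj⟩ := ht
    refine ⟨by simp [orBelow], (ihl hl).congr fun u hu => ?_, (ihr hr).congr fun u hu => ?_⟩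
    · have huv : u ≠ v := by rintro rfl; exact hvl hu
      simp [orBelow, huv, hu]
    · have huv : u ≠ v := by rintro rfl; exact hvr hu
      have hul : u ∉ l.internals := fun h => hdisj u h u hu rfl
      simp [orBelow, huv, hul]

theorem Agrees.rootVar_eq {x b : ℕ → Bool} {t : ClauseTree} (h : Agrees x b t) :
    rootVar x b t = orLeaves x t := by
  cases t with
  | leaf _ => rfl
  | node _ _ _ => exact h.1

theorem triCount_le_two (p q r : Bool) : triCount p q r ≤ 2 := by
  cases p <;> cases q <;> cases r <;> decide

theorem triCount_or (p q : Bool) : triCount p q (p || q) = 2 := by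
  cases p <;> cases q <;> decide

theorem countSat_le (x b : ℕ → Bool) (t : ClauseTree) :
    countSat x b t ≤ 2 * t.internals.length := by
  induction t with
  | leaf _ => simp [countSat, internals]
  | node v l r ihl ihr =>
    have := triCount_le_two (rootVar x b l) (rootVar x b r) (b v)
    simp only [countSat, internals, List.length_cons, List.length_append]
    omega

theorem Agrees.countSat_eq {x b : ℕ → Bool} {t : ClauseTree} (h : Agrees x b t) :
    countSat x b t = 2 * t.internals.length := by
  induction t with
  | leaf _ => simp [countSat, internals]
  | node v l r ihl ihr =>
    obtain ⟨hv, hl, hr⟩ := h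
    have htri : triCount (rootVar x b l) (rootVar x b r) (b v) = 2 := by
      rw [hl.rootVar_eq, hr.rootVar_eq, hv, orLeaves, triCount_or]
    simp only [countSat, internals, List.length_cons, List.length_append, ihl hl, ihr hr, htri]
    ring

theorem length_leaves (t : ClauseTree) : t.leaves.length = t.internals.length + 1 := by
  induction t with
  | leaf _ => rfl
  | node _ l r ihl ihr =>
    simp only [leaves, internals, List.length_cons, List.length_append, ihl, ihr]
    omega

theorem orLeaves_eq_any (x : ℕ → Bool) (t : ClauseTree) : orLeaves x t = t.leaves.any x := by
  induction t with
  | leaf _ => simp [orLeaves, leaves]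
  | node _ l r ihl ihr => simp [orLeaves, leaves, ihl, ihr]

theorem IsClauseTree.length_internals {k : ℕ} {t : ClauseTree} (ht : IsClauseTree k t) :
    t.internals.length = k - 1 := by
  obtain ⟨hnd, hmem, -⟩ := ht
  have hfin : t.leaves.toFinset = Finset.Icc 1 k := by ext i; simp [hmem]
  have hk : t.leaves.length = k := by
    rw [← List.toFinset_card_of_nodup hnd, hfin, Nat.card_Icc, Nat.add_sub_cancel]
  have := length_leaves t
  omega

end ClauseTree

theorem clause_tree_or_extension_optimal_general (k : ℕ)
    (t : ClauseTree) (ht : ClauseTree.IsClauseTree k t) (x : ℕ → Bool) :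
    (∃ b : ℕ → Bool, ClauseTree.Agrees x b t) ∧
    ∀ b : ℕ → Bool, ClauseTree.Agrees x b t →
      ClauseTree.countSat x b t = 2 * (k - 1) ∧
      (∀ b' : ℕ → Bool, ClauseTree.countSat x b' t ≤ ClauseTree.countSat x b t) ∧
      (ClauseTree.rootVar x b t = true ↔ ∃ i ∈ Finset.Icc 1 k, x i = true) := by
  refine ⟨⟨_, ClauseTree.agrees_orBelow x ht.2.2⟩, fun b hb => ⟨?_, fun b' => ?_, ?_⟩⟩
  · rw [hb.countSat_eq, ht.length_internals]
  · rw [hb.countSat_eq]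
    exact ClauseTree.countSat_le x b' t
  · simp only [hb.rootVar_eq, ClauseTree.orLeaves_eq_any, List.any_eq_true, ht.2.1]

theorem clause_tree_or_extension_optimal (k : ℕ) (hk : 2 ≤ k)
    (t : ClauseTree) (ht : ClauseTree.IsClauseTree k t) (x : ℕ → Bool) :
    (∃ b : ℕ → Bool, ClauseTree.Agrees x b t) ∧
    ∀ b : ℕ → Bool, ClauseTree.Agrees x b t →
      ClauseTree.countSat x b t = 2 * (k - 1) ∧
      (∀ b' : ℕ → Bool, ClauseTree.countSat x b' t ≤ ClauseTree.countSat x b t) ∧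
      (ClauseTree.rootVar x b t = true ↔ ∃ i ∈ Finset.Icc 1 k, x i = true) :=
  clause_tree_or_extension_optimal_general k t ht x
end

section
/- Let k = 2^s with s ≥ 2. The translation of the clause x₁ ∨ ⋯ ∨ x_k into T^c(x₁ ∨ ⋯ ∨ x_k) is a strict (α,β)-gadget from kSAT to Max2XOR with s−1 = log₂k − 1 auxiliary variables, where α = k(k−1)/2 and β = (11k² − 15k + 4)/12. That is: the total weight of T^c is (11k² − 15k + 4)/12; for every assignment I of x₁,…,x_k satisfying the clause, every extension of I to b₁,…,b_{s−1} has value at most k(k−1)/2 and some extension attains k(k−1)/2; and for every I falsifying the clause, every extension has value at most k(k−1)/2 − 1 and the extension assigning 1 to every b_j attains k(k−1)/2 − 1. -/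
open Finset

/-- Value (total satisfied weight) of T^c(x₁ ∨ ⋯ ∨ x_k), for k = 2^s, under the
assignment given by `x` (values of x₁,…,x_k) and `b` (values of b₁,…,b_{s−1}), all
1-indexed.  The constraints are: x_i = 1 with weight 1/2; b_j = 1 with weight 2^{j−1};
x_i ⊕ x_j = 1 (i < j) with weight 1/2; b_i ⊕ b_j = 1 (i < j) with weight 2^{i+j−1};
x_i ⊕ b_j = 1 with weight 2^{j−1}. -/
def TcVal (k s : ℕ) (x b : ℕ → Bool) : ℚ :=
  (∑ i ∈ Finset.Icc 1 k, if x i = true then (1 : ℚ)/2 else 0) +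
  (∑ j ∈ Finset.Icc 1 (s - 1), if b j = true then (2 : ℚ)^(j - 1) else 0) +
  (∑ i ∈ Finset.Icc 1 k, ∑ j ∈ Finset.Icc 1 k,
      if i < j ∧ xor (x i) (x j) = true then (1 : ℚ)/2 else 0) +
  (∑ i ∈ Finset.Icc 1 (s - 1), ∑ j ∈ Finset.Icc 1 (s - 1),
      if i < j ∧ xor (b i) (b j) = true then (2 : ℚ)^(i + j - 1) else 0) +
  (∑ i ∈ Finset.Icc 1 k, ∑ j ∈ Finset.Icc 1 (s - 1),
      if xor (x i) (b j) = true then (2 : ℚ)^(j - 1) else 0)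

/-- Total weight of the constraints of T^c(x₁ ∨ ⋯ ∨ x_k). -/
def TcWeight (k s : ℕ) : ℚ :=
  (∑ _i ∈ Finset.Icc 1 k, (1 : ℚ)/2) +
  (∑ j ∈ Finset.Icc 1 (s - 1), (2 : ℚ)^(j - 1)) +
  (∑ i ∈ Finset.Icc 1 k, ∑ j ∈ Finset.Icc 1 k, if i < j then (1 : ℚ)/2 else 0) +
  (∑ i ∈ Finset.Icc 1 (s - 1), ∑ j ∈ Finset.Icc 1 (s - 1),
      if i < j then (2 : ℚ)^(i + j - 1) else 0) +
  (∑ _i ∈ Finset.Icc 1 k, ∑ j ∈ Finset.Icc 1 (s - 1), (2 : ℚ)^(j - 1))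

private lemma geom2 (m : ℕ) : ∑ j ∈ Finset.Icc 1 m, (2:ℚ)^(j-1) = 2^m - 1 := by
  induction m with
  | zero => simp
  | succ n ih =>
    rw [Finset.sum_Icc_succ_top (by omega : 1 ≤ n + 1), ih]
    simp [pow_succ]; ring

private lemma geom4 (m : ℕ) : ∑ j ∈ Finset.Icc 1 m, (4:ℚ)^(j-1) = (4^m - 1)/3 := by
  induction m with
  | zero => simp
  | succ n ih =>
    rw [Finset.sum_Icc_succ_top (by omega : 1 ≤ n + 1), ih]
    simp [pow_succ]; ring

private lemma half_offdiag (A : Finset ℕ) (F : ℕ → ℕ → ℚ)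
    (hsymm : ∀ i j, F i j = F j i) (hdiag : ∀ i, F i i = 0) :
    (∑ i ∈ A, ∑ j ∈ A, if i < j then F i j else 0) = (∑ i ∈ A, ∑ j ∈ A, F i j) / 2 := by
  have h1 : ∀ i ∈ A, ∑ j ∈ A, F i j
      = (∑ j ∈ A, if i < j then F i j else 0) + ∑ j ∈ A, if j < i then F i j else 0 := by
    intro i _
    rw [← Finset.sum_add_distrib]
    refine Finset.sum_congr rfl fun j _ => ?_
    rcases lt_trichotomy i j with h | h | h
    · simp [h, asymm h]
    · subst h; simp [hdiag i]
    · simp [h, asymm h]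
  rw [Finset.sum_congr rfl h1, Finset.sum_add_distrib]
  have h2 : (∑ i ∈ A, ∑ j ∈ A, if j < i then F i j else 0)
      = ∑ i ∈ A, ∑ j ∈ A, if i < j then F i j else 0 := by
    rw [Finset.sum_comm]
    exact Finset.sum_congr rfl fun i _ => Finset.sum_congr rfl fun j _ => by rw [hsymm]
  rw [h2]; ring

private lemma bits (n : ℕ) : ∀ t : ℕ, t < 2^n →
    (∑ j ∈ Finset.range n, if (t / 2^j) % 2 = 1 then 2^j else 0) = t := by
  induction n with
  | zero => intro t ht; interval_cases t; simp
  | succ n ih =>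
    intro t ht
    rw [Finset.sum_range_succ']
    have h1 : ∀ i ∈ Finset.range n, (if (t / 2^(i+1)) % 2 = 1 then 2^(i+1) else 0)
        = 2 * (if ((t/2) / 2^i) % 2 = 1 then 2^i else 0) := by
      intro i _
      have hd : (t/2) / 2^i = t / 2^(i+1) := by
        rw [Nat.div_div_eq_div_mul, ← pow_succ']
      rw [hd]; split <;> ring
    rw [Finset.sum_congr rfl h1, ← Finset.mul_sum,
      ih (t/2) ((Nat.div_lt_iff_lt_mul two_pos).mpr (by rw [pow_succ] at ht; exact ht))]
    rcases Nat.mod_two_eq_zero_or_one t with h | h <;> simp [h] <;> omega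

private lemma exists_b (s tgt : ℕ) (h : tgt < 2^(s-1)) :
    ∃ b : ℕ → Bool,
      (∑ j ∈ Finset.Icc 1 (s-1), if b j = true then (2:ℚ)^(j-1) else 0) = tgt := by
  refine ⟨fun j => decide ((tgt / 2^(j-1)) % 2 = 1), ?_⟩
  have hN : (∑ j ∈ Finset.Icc 1 (s-1), if (tgt / 2^(j-1)) % 2 = 1 then 2^(j-1) else 0)
      = tgt := by
    rw [← Finset.Ico_add_one_right_eq_Icc, Finset.sum_Ico_eq_sum_range]
    simpa using bits (s-1) tgt h
  calc (∑ j ∈ Finset.Icc 1 (s-1),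
          if (decide ((tgt / 2^(j-1)) % 2 = 1)) = true then (2:ℚ)^(j-1) else 0)
      = ((∑ j ∈ Finset.Icc 1 (s-1),
          if (tgt / 2^(j-1)) % 2 = 1 then 2^(j-1) else 0 : ℕ) : ℚ) := by
        push_cast
        exact Finset.sum_congr rfl fun j _ => by
          simp only [decide_eq_true_eq]
    _ = tgt := by rw [hN]

private lemma cast_tsum (s : ℕ) (b : ℕ → Bool) :
    (∑ j ∈ Finset.Icc 1 (s-1), if b j = true then (2:ℚ)^(j-1) else 0)
    = ((∑ j ∈ Finset.Icc 1 (s-1), if b j = true then 2^(j-1) else 0 : ℕ) : ℚ) := by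
  push_cast
  exact Finset.sum_congr rfl fun j _ => by split <;> simp

private lemma sum_ite_mul (A : Finset ℕ) (p : ℕ → Bool) (c : ℚ) (f : ℕ → ℚ) :
    (∑ i ∈ A, if p i = true then c * f i else 0)
      = c * ∑ i ∈ A, if p i = true then f i else 0 := by
  rw [Finset.mul_sum]
  exact Finset.sum_congr rfl fun i _ => by split <;> simp

private lemma sum_ite_mul' (A : Finset ℕ) (p : ℕ → Bool) (c : ℚ) (f : ℕ → ℚ) :
    (∑ i ∈ A, if p i = true then 0 else c * f i)
      = c * ∑ i ∈ A, if p i = true then 0 else f i := by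
  rw [Finset.mul_sum]
  exact Finset.sum_congr rfl fun i _ => by split <;> simp

set_option linter.unreachableTactic false in
set_option linter.unusedTactic false in

private lemma ite_and' (p q : Prop) [Decidable p] [Decidable q] (a : ℚ) :
    (if p ∧ q then a else 0) = if p then (if q then a else 0) else 0 := by
  split_ifs <;> simp_all

set_option linter.unreachableTactic false in
set_option linter.unusedTactic false in
private lemma expand_xor_sum (A B : Finset ℕ) (p q : ℕ → Bool) (u v : ℕ → ℚ) :
    (∑ i ∈ A, ∑ j ∈ B, if xor (p i) (q j) = true then u i * v j else 0)
    = (∑ i ∈ A, if p i = true then u i else 0) * (∑ j ∈ B, if q j = true then 0 else v j)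
    + (∑ i ∈ A, if p i = true then 0 else u i) * (∑ j ∈ B, if q j = true then v j else 0) := by
  rw [Finset.sum_mul, Finset.sum_mul, ← Finset.sum_add_distrib]
  refine Finset.sum_congr rfl fun i _ => ?_
  cases hp : p i
  · norm_num [Bool.false_xor, Finset.mul_sum]
    try exact Finset.sum_congr rfl fun j _ => by cases hq : q j <;> simp
  · norm_num [Bool.true_xor, Finset.mul_sum]
    try exact Finset.sum_congr rfl fun j _ => by cases hq : q j <;> simp

private lemma TcVal_closed (s k : ℕ) (hs : 1 ≤ s) (hk : k = 2 ^ s) (x b : ℕ → Bool) :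
    TcVal k s x b
      = (k:ℚ)*(k-1)/2
        - (2*(∑ j ∈ Finset.Icc 1 (s-1), if b j = true then (2:ℚ)^(j-1) else 0)
           + (∑ i ∈ Finset.Icc 1 k, if x i = true then (1:ℚ) else 0) - k)
          * (2*(∑ j ∈ Finset.Icc 1 (s-1), if b j = true then (2:ℚ)^(j-1) else 0)
             + (∑ i ∈ Finset.Icc 1 k, if x i = true then (1:ℚ) else 0) - k + 1) / 2 := by
  have hkQ : (k:ℚ) = 2 * 2^(s-1) := by
    rw [hk, show s = s - 1 + 1 by omega]
    push_cast [pow_succ]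
    ring
  -- abbreviations
  set N : ℚ := ∑ i ∈ Finset.Icc 1 k, if x i = true then (1:ℚ) else 0 with hN
  set M : ℚ := ∑ i ∈ Finset.Icc 1 k, if x i = true then 0 else (1:ℚ) with hM
  set t : ℚ := ∑ j ∈ Finset.Icc 1 (s-1), if b j = true then (2:ℚ)^(j-1) else 0 with ht
  set t' : ℚ := ∑ j ∈ Finset.Icc 1 (s-1), if b j = true then 0 else (2:ℚ)^(j-1) with ht'
  have hNM : N + M = k := by
    rw [hN, hM, ← Finset.sum_add_distrib]
    rw [Finset.sum_congr rfl (fun i _ => by split <;> ring : ∀ i ∈ Finset.Icc 1 k,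
      ((if x i = true then (1:ℚ) else 0) + if x i = true then 0 else (1:ℚ)) = 1)]
    simp [Nat.card_Icc]
  have htt : t + t' = 2^(s-1) - 1 := by
    rw [ht, ht', ← Finset.sum_add_distrib]
    rw [Finset.sum_congr rfl (fun j _ => by split <;> ring : ∀ j ∈ Finset.Icc 1 (s-1),
      ((if b j = true then (2:ℚ)^(j-1) else 0) + if b j = true then 0 else (2:ℚ)^(j-1))
        = (2:ℚ)^(j-1))]
    exact geom2 (s-1)
  -- term 1
  have e1 : (∑ i ∈ Finset.Icc 1 k, if x i = true then (1 : ℚ)/2 else 0) = N/2 := by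
    rw [hN, Finset.sum_div]
    exact Finset.sum_congr rfl fun i _ => by split <;> simp
  -- term 3
  have e3 : (∑ i ∈ Finset.Icc 1 k, ∑ j ∈ Finset.Icc 1 k,
      if i < j ∧ xor (x i) (x j) = true then (1 : ℚ)/2 else 0) = N * M / 2 := by
    have step1 : ∀ i ∈ Finset.Icc 1 k, ∀ j ∈ Finset.Icc 1 k,
        (if i < j ∧ xor (x i) (x j) = true then (1 : ℚ)/2 else 0)
        = if i < j then (if xor (x i) (x j) = true then (1:ℚ) * (1/2) else 0) else 0 := by
      intro i _ j _; rw [ite_and']; congr 1; congr 1; ring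
    rw [Finset.sum_congr rfl fun i hi => Finset.sum_congr rfl (step1 i hi)]
    rw [half_offdiag _ _ (fun i j => by rw [Bool.xor_comm]) (fun i => by simp)]
    rw [expand_xor_sum (Finset.Icc 1 k) (Finset.Icc 1 k) x x (fun _ => (1:ℚ))
      (fun _ => (1:ℚ)/2)]
    have hM2 : (∑ j ∈ Finset.Icc 1 k, if x j = true then 0 else (1:ℚ)/2) = M/2 := by
      rw [hM, Finset.sum_div]
      exact Finset.sum_congr rfl fun i _ => by split <;> simp
    rw [hM2, e1, ← hN, ← hM]
    ring
  -- term 4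
  have e4 : (∑ i ∈ Finset.Icc 1 (s-1), ∑ j ∈ Finset.Icc 1 (s-1),
      if i < j ∧ xor (b i) (b j) = true then (2:ℚ)^(i + j - 1) else 0)
      = (2*t*t' + 2*t'*t)/2 := by
    have step1 : ∀ i ∈ Finset.Icc 1 (s-1), ∀ j ∈ Finset.Icc 1 (s-1),
        (if i < j ∧ xor (b i) (b j) = true then (2:ℚ)^(i + j - 1) else 0)
        = if i < j then (if xor (b i) (b j) = true
            then (2*(2:ℚ)^(i-1)) * (2:ℚ)^(j-1) else 0) else 0 := by
      intro i hi j hj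
      simp only [Finset.mem_Icc] at hi hj
      rw [ite_and', show (2:ℚ)^(i+j-1) = (2*(2:ℚ)^(i-1))*(2:ℚ)^(j-1) by
        rw [← pow_succ', ← pow_add]; congr 1; omega]
    rw [Finset.sum_congr rfl fun i hi => Finset.sum_congr rfl (step1 i hi)]
    rw [half_offdiag _ _ (fun i j => by
        rw [Bool.xor_comm]; split <;> ring) (fun i => by simp)]
    rw [expand_xor_sum (Finset.Icc 1 (s-1)) (Finset.Icc 1 (s-1)) b b
      (fun i => 2*(2:ℚ)^(i-1)) (fun j => (2:ℚ)^(j-1))]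
    rw [sum_ite_mul _ b 2 (fun i => (2:ℚ)^(i-1)),
        sum_ite_mul' _ b 2 (fun i => (2:ℚ)^(i-1)), ← ht, ← ht']
  -- term 5
  have e5 : (∑ i ∈ Finset.Icc 1 k, ∑ j ∈ Finset.Icc 1 (s-1),
      if xor (x i) (b j) = true then (2:ℚ)^(j - 1) else 0) = N*t' + M*t := by
    have step1 : ∀ i ∈ Finset.Icc 1 k, ∀ j ∈ Finset.Icc 1 (s-1),
        (if xor (x i) (b j) = true then (2:ℚ)^(j - 1) else 0)
        = if xor (x i) (b j) = true then (1:ℚ) * (2:ℚ)^(j-1) else 0 := by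
      intro i _ j _; split <;> ring
    rw [Finset.sum_congr rfl fun i hi => Finset.sum_congr rfl (step1 i hi)]
    rw [expand_xor_sum (Finset.Icc 1 k) (Finset.Icc 1 (s-1)) x b
      (fun _ => (1:ℚ)) (fun j => (2:ℚ)^(j-1))]
  -- assemble
  simp only [TcVal]
  rw [e1, e3, e4, e5, ← ht]
  have hM' : M = (k:ℚ) - N := by linarith
  have ht2 : t' = 2^(s-1) - 1 - t := by linarith
  rw [hM', ht2, hkQ]
  ring

private lemma TcWeight_eq (s k : ℕ) (hs : 1 ≤ s) (hk : k = 2 ^ s) :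
    TcWeight k s = (11 * (k:ℚ)^2 - 15 * k + 4) / 12 := by
  have hkQ : (k:ℚ) = 2 * 2^(s-1) := by
    rw [hk, show s = s - 1 + 1 by omega]
    push_cast [pow_succ]
    ring
  have w1 : (∑ _i ∈ Finset.Icc 1 k, (1 : ℚ)/2) = (k:ℚ)/2 := by
    simp [Nat.card_Icc]; ring
  have w3 : (∑ i ∈ Finset.Icc 1 k, ∑ j ∈ Finset.Icc 1 k, if i < j then (1:ℚ)/2 else 0)
      = ((k:ℚ) * ((k:ℚ) - 1) / 2) / 2 := by
    have step : ∀ i ∈ Finset.Icc 1 k, ∀ j ∈ Finset.Icc 1 k,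
        (if i < j then (1:ℚ)/2 else 0)
        = if i < j then (if i = j then 0 else (1:ℚ)/2) else 0 := by
      intro i _ j _
      by_cases h : i < j
      · rw [if_pos h, if_pos h, if_neg (by omega : ¬ i = j)]
      · rw [if_neg h, if_neg h]
    rw [Finset.sum_congr rfl fun i hi => Finset.sum_congr rfl (step i hi)]
    rw [half_offdiag _ (fun i j => if i = j then 0 else (1:ℚ)/2)
      (fun i j => by simp [eq_comm]) (fun i => by simp)]
    have inner : ∀ i ∈ Finset.Icc 1 k,
        (∑ j ∈ Finset.Icc 1 k, if i = j then 0 else (1:ℚ)/2) = (k:ℚ)/2 - 1/2 := by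
      intro i hi
      have h0 : ∀ j ∈ Finset.Icc 1 k, (if i = j then (0:ℚ) else 1/2)
          = 1/2 - (if i = j then (1:ℚ)/2 else 0) := fun j _ => by split <;> ring
      rw [Finset.sum_congr rfl h0, Finset.sum_sub_distrib, Finset.sum_const,
        Finset.sum_ite_eq, if_pos hi]
      simp [Nat.card_Icc]
      ring
    rw [Finset.sum_congr rfl inner, Finset.sum_const]
    simp [Nat.card_Icc]
    ring
  have w4 : (∑ i ∈ Finset.Icc 1 (s-1), ∑ j ∈ Finset.Icc 1 (s-1),
      if i < j then (2:ℚ)^(i + j - 1) else 0)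
      = (2*((2:ℚ)^(s-1)-1)*((2:ℚ)^(s-1)-1) - 2*((4:ℚ)^(s-1) - 1)/3)/2 := by
    have step : ∀ i ∈ Finset.Icc 1 (s-1), ∀ j ∈ Finset.Icc 1 (s-1),
        (if i < j then (2:ℚ)^(i + j - 1) else 0)
        = if i < j then (if i = j then 0 else (2:ℚ)^(i+j-1)) else 0 := by
      intro i _ j _
      by_cases h : i < j
      · rw [if_pos h, if_pos h, if_neg (by omega : ¬ i = j)]
      · rw [if_neg h, if_neg h]
    rw [Finset.sum_congr rfl fun i hi => Finset.sum_congr rfl (step i hi)]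
    rw [half_offdiag _ (fun i j => if i = j then 0 else (2:ℚ)^(i+j-1))
      (fun i j => by
        show (if i = j then (0:ℚ) else (2:ℚ)^(i+j-1))
            = (if j = i then (0:ℚ) else (2:ℚ)^(j+i-1))
        by_cases h : i = j
        · simp [h]
        · rw [if_neg h, if_neg (Ne.symm h), Nat.add_comm]) (fun i => by simp)]
    have inner : ∀ i ∈ Finset.Icc 1 (s-1),
        (∑ j ∈ Finset.Icc 1 (s-1), if i = j then 0 else (2:ℚ)^(i+j-1))
        = 2*((2:ℚ)^(s-1)-1)*(2:ℚ)^(i-1) - 2*(4:ℚ)^(i-1) := by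
      intro i hi
      have hi' : 1 ≤ i := (Finset.mem_Icc.mp hi).1
      have h0 : ∀ j ∈ Finset.Icc 1 (s-1), (if i = j then (0:ℚ) else (2:ℚ)^(i+j-1))
          = (2*(2:ℚ)^(i-1))*(2:ℚ)^(j-1)
            - (if i = j then (2*(2:ℚ)^(i-1))*(2:ℚ)^(j-1) else 0) := by
        intro j hj
        have hj' : 1 ≤ j := (Finset.mem_Icc.mp hj).1
        have hp : (2:ℚ)^(i+j-1) = (2*(2:ℚ)^(i-1))*(2:ℚ)^(j-1) := by
          rw [← pow_succ', ← pow_add]; congr 1; omega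
        split_ifs with h
        · ring
        · rw [hp]; ring
      rw [Finset.sum_congr rfl h0, Finset.sum_sub_distrib, ← Finset.mul_sum, geom2,
        Finset.sum_ite_eq, if_pos hi]
      have h4 : (2:ℚ)^(i-1)*(2:ℚ)^(i-1) = (4:ℚ)^(i-1) := by
        rw [show (4:ℚ) = 2*2 by norm_num, mul_pow]
      linear_combination (-2:ℚ) * h4
    rw [Finset.sum_congr rfl inner, Finset.sum_sub_distrib, ← Finset.mul_sum,
      ← Finset.mul_sum, geom2, geom4]
    ring
  have w5 : (∑ _i ∈ Finset.Icc 1 k, ∑ j ∈ Finset.Icc 1 (s-1), (2:ℚ)^(j-1))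
      = (k:ℚ) * ((2:ℚ)^(s-1) - 1) := by
    rw [Finset.sum_congr rfl fun i _ => geom2 (s-1), Finset.sum_const]
    simp [Nat.card_Icc]
  have h42 : (4:ℚ)^(s-1) = (2:ℚ)^(s-1) * (2:ℚ)^(s-1) := by
    rw [show (4:ℚ) = 2*2 by norm_num, mul_pow]
  simp only [TcWeight]
  rw [w1, w3, w4, w5, geom2, h42, hkQ]
  ring


/-!
STATEMENT 18: For k = 2^s with s ≥ 2, T^c(x₁ ∨ ⋯ ∨ x_k) is a strict (α,β)-gadget from
kSAT to Max2XOR with s−1 = log₂k − 1 auxiliary variables, where α = k(k−1)/2 and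
β = (11k² − 15k + 4)/12: the total weight is (11k² − 15k + 4)/12; if the clause is
satisfied, every extension has value at most k(k−1)/2 and some extension attains it; if
the clause is falsified, every extension has value at most k(k−1)/2 − 1 and the extension
assigning 1 to every b_j attains k(k−1)/2 − 1.
-/
theorem Tc_is_strict_gadget (s : ℕ) (hs : 2 ≤ s) (k : ℕ) (hk : k = 2 ^ s) :
    TcWeight k s = (11 * (k : ℚ)^2 - 15 * k + 4) / 12 ∧
    (∀ x : ℕ → Bool, (∃ i ∈ Finset.Icc 1 k, x i = true) →
      (∀ b : ℕ → Bool, TcVal k s x b ≤ (k : ℚ) * (k - 1) / 2) ∧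
      (∃ b : ℕ → Bool, TcVal k s x b = (k : ℚ) * (k - 1) / 2)) ∧
    (∀ x : ℕ → Bool, (∀ i ∈ Finset.Icc 1 k, x i = false) →
      (∀ b : ℕ → Bool, TcVal k s x b ≤ (k : ℚ) * (k - 1) / 2 - 1) ∧
      TcVal k s x (fun _ => true) = (k : ℚ) * (k - 1) / 2 - 1) := by
  have hs1 : 1 ≤ s := by omega
  have hkQ : (k:ℚ) = 2 * 2^(s-1) := by
    rw [hk, show s = s - 1 + 1 by omega]
    push_cast [pow_succ]
    ring
  refine ⟨TcWeight_eq s k hs1 hk, fun x hx => ⟨?_, ?_⟩, fun x hx => ⟨?_, ?_⟩⟩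
  · -- satisfied: upper bound
    intro b
    rw [TcVal_closed s k hs1 hk x b]
    have hNnat : (∑ i ∈ Finset.Icc 1 k, if x i = true then (1:ℚ) else 0)
        = (((Finset.Icc 1 k).filter (fun i => x i = true)).card : ℚ) := by
      rw [Finset.sum_boole]
    have htnat := cast_tsum s b
    set c : ℕ := ((Finset.Icc 1 k).filter (fun i => x i = true)).card
    set tN : ℕ := ∑ j ∈ Finset.Icc 1 (s-1), if b j = true then 2^(j-1) else 0
    set z : ℤ := 2*(tN:ℤ) + c - k with hz
    have hzq : 2*(∑ j ∈ Finset.Icc 1 (s-1), if b j = true then (2:ℚ)^(j-1) else 0)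
        + (∑ i ∈ Finset.Icc 1 k, if x i = true then (1:ℚ) else 0) - k = (z:ℚ) := by
      rw [htnat, hNnat, hz]; push_cast; ring
    have hz0 : (0:ℤ) ≤ z*(z+1) := by
      rcases le_or_gt 0 z with h | h <;> nlinarith
    have h2 : (0:ℚ) ≤ (z:ℚ) * ((z:ℚ)+1) := by exact_mod_cast hz0
    rw [hzq]
    linarith
  · -- satisfied: attainment
    have hc1 : 1 ≤ ((Finset.Icc 1 k).filter (fun i => x i = true)).card := by
      obtain ⟨i0, hi0, hxi0⟩ := hx
      exact Finset.card_pos.mpr ⟨i0, Finset.mem_filter.mpr ⟨hi0, hxi0⟩⟩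
    have hck : ((Finset.Icc 1 k).filter (fun i => x i = true)).card ≤ k :=
      le_trans (Finset.card_filter_le _ _) (by simp [Nat.card_Icc])
    set c : ℕ := ((Finset.Icc 1 k).filter (fun i => x i = true)).card
    have htgt : (k - c)/2 < 2^(s-1) := by
      have hk2 : k = 2^(s-1) * 2 := by rw [hk, ← pow_succ]; congr 1; omega
      have hkpos : 1 ≤ k := by rw [hk]; exact Nat.one_le_two_pow
      exact (Nat.div_lt_iff_lt_mul two_pos).mpr (by omega)
    obtain ⟨b, hb⟩ := exists_b s ((k - c)/2) htgt
    refine ⟨b, ?_⟩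
    rw [TcVal_closed s k hs1 hk x b, hb]
    have hNnat : (∑ i ∈ Finset.Icc 1 k, if x i = true then (1:ℚ) else 0) = (c:ℚ) := by
      rw [Finset.sum_boole]
    rw [hNnat]
    rcases Nat.mod_two_eq_zero_or_one (k - c) with h | h
    · have hnn : 2*((k-c)/2) + c = k := by omega
      have hq : 2*(((k-c)/2 : ℕ):ℚ) + (c:ℚ) = (k:ℚ) := by
        exact_mod_cast congrArg (fun n : ℕ => (n:ℚ)) hnn
      have hu : 2*(((k-c)/2 : ℕ):ℚ) + (c:ℚ) - (k:ℚ) = 0 := by linarith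
      rw [hu]; ring
    · have hnn : 2*((k-c)/2) + c + 1 = k := by omega
      have hq : 2*(((k-c)/2 : ℕ):ℚ) + (c:ℚ) + 1 = (k:ℚ) := by
        exact_mod_cast congrArg (fun n : ℕ => (n:ℚ)) hnn
      have hu : 2*(((k-c)/2 : ℕ):ℚ) + (c:ℚ) - (k:ℚ) = -1 := by linarith
      rw [hu]; ring
  · -- falsified: upper bound
    intro b
    rw [TcVal_closed s k hs1 hk x b]
    have hN0 : (∑ i ∈ Finset.Icc 1 k, if x i = true then (1:ℚ) else 0) = 0 :=
      Finset.sum_eq_zero fun i hi => by rw [hx i hi]; simp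
    rw [hN0]
    have htle : (∑ j ∈ Finset.Icc 1 (s-1), if b j = true then (2:ℚ)^(j-1) else 0)
        ≤ 2^(s-1) - 1 := by
      rw [← geom2]
      refine Finset.sum_le_sum fun j _ => ?_
      split
      · exact le_refl _
      · positivity
    set t : ℚ := ∑ j ∈ Finset.Icc 1 (s-1), if b j = true then (2:ℚ)^(j-1) else 0
    have hu : 2*t + 0 - (k:ℚ) ≤ -2 := by rw [hkQ]; linarith
    nlinarith [mul_nonneg (by linarith : (0:ℚ) ≤ -(2*t + 0 - (k:ℚ)) - 2)
      (by linarith : (0:ℚ) ≤ -(2*t + 0 - (k:ℚ)) - 1)]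
  · -- falsified: attainment
    rw [TcVal_closed s k hs1 hk x (fun _ => true)]
    have hN0 : (∑ i ∈ Finset.Icc 1 k, if x i = true then (1:ℚ) else 0) = 0 :=
      Finset.sum_eq_zero fun i hi => by rw [hx i hi]; simp
    have ht : (∑ j ∈ Finset.Icc 1 (s-1),
        if (fun _ => true) j = true then (2:ℚ)^(j-1) else 0) = 2^(s-1) - 1 := by
      simpa using geom2 (s-1)
    rw [hN0, ht, hkQ]
    ring
end

section
/- Let k = 2^s with s ≥ 2, and assign to each variable of T^c(x₁ ∨ ⋯ ∨ x_k) the node weight μ(x_i) = 1 for i = 1,…,k and μ(b_j) = 2^j for j = 1,…,s−1. For any assignment I of all the variables, let w₁ be the sum of μ(v) over the variables v with I(v) = 1, and let w₀ = 1 + (sum of μ(v) over the variables v with I(v) = 0), the extra 1 accounting for a constant node fixed to 0. Then w₁ + w₀ = 2k − 1, and the total weight of the constraints of T^c(x₁ ∨ ⋯ ∨ x_k) satisfied by I equals w₁·w₀/2. -/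
open Finset

/-!
Give the constant node weight 1 and put it on the 0 side. Every constraint of
T^c(x₁ ∨ ⋯ ∨ x_k) is an edge u–v whose weight is μ(u)μ(v)/2 (a unary constraint v = 1 is
the edge from v to the constant node), and it is satisfied exactly when its endpoints get
different values. So the satisfied weight is half the weight of the cut, which for product
weights factors as (weight of the 1 side)·(weight of the 0 side). The node weights add up
to k + (2 + 4 + ⋯ + 2^{s−1}) + 1 = 2k − 1.
-/

section CutWeight

variable {ι R : Type*}

lemma ite_xor_mul [Semiring R] (a c : Bool) (u v : R) :
    (if xor a c = true then u * v else 0) =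
      (if a = true then u else 0) * (if c = true then 0 else v) +
        (if a = true then 0 else u) * (if c = true then v else 0) := by
  cases a <;> cases c <;> simp

lemma sum_ite_add_sum_ite_not [AddCommMonoid R] (S : Finset ι) (w : ι → R) (p : ι → Bool) :
    (∑ i ∈ S, if p i = true then w i else 0) + (∑ i ∈ S, if p i = true then 0 else w i) =
      ∑ i ∈ S, w i := by
  rw [← sum_add_distrib]
  exact sum_congr rfl fun i _ => by cases p i <;> simp

lemma sum_sum_ite_xor_mul [CommSemiring R] {κ : Type*} (S : Finset ι) (T : Finset κ)
    (u : ι → R) (v : κ → R) (p : ι → Bool) (q : κ → Bool) :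
    (∑ i ∈ S, ∑ j ∈ T, if xor (p i) (q j) = true then u i * v j else 0) =
      (∑ i ∈ S, if p i = true then u i else 0) * (∑ j ∈ T, if q j = true then 0 else v j) +
        (∑ i ∈ S, if p i = true then 0 else u i) * (∑ j ∈ T, if q j = true then v j else 0) := by
  simp only [ite_xor_mul, sum_add_distrib, sum_mul_sum]

/-- A pair {i, j} separated by `p` is counted once, in the order that puts its `true` end
first, so the sum over i < j is the sum over all ordered (`true`, `false`) pairs. -/
lemma sum_sum_lt_ite_xor_mul [CommSemiring R] [LinearOrder ι] (S : Finset ι) (w : ι → R)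
    (p : ι → Bool) :
    (∑ i ∈ S, ∑ j ∈ S, if i < j ∧ xor (p i) (p j) = true then w i * w j else 0) =
      (∑ i ∈ S, if p i = true then w i else 0) * (∑ i ∈ S, if p i = true then 0 else w i) := by
  set g : ι → ι → R := fun i j =>
    (if p i = true then w i else 0) * (if p j = true then 0 else w j) with hg
  have hsummand : ∀ i j, (if i < j ∧ xor (p i) (p j) = true then w i * w j else 0) =
      (if i < j then g i j else 0) + (if i < j then g j i else 0) := by
    intro i j
    rw [ite_and, ite_xor_mul]
    by_cases h : i < j
    · simp only [h, if_true, hg]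
      ring
    · simp only [h, if_false, add_zero]
  have hdiag : ∀ i j, (if i < j then g i j else 0) + (if j < i then g i j else 0) = g i j := by
    intro i j
    rcases lt_trichotomy i j with h | rfl | h
    · simp [h, h.not_gt]
    · cases hp : p i <;> simp [hg, hp]
    · simp [h, h.not_gt]
  calc _ = (∑ i ∈ S, ∑ j ∈ S, if i < j then g i j else 0) +
        ∑ i ∈ S, ∑ j ∈ S, if j < i then g i j else 0 := by
        simp only [hsummand, sum_add_distrib]
        rw [sum_comm (f := fun i j => if i < j then g j i else 0)]
    _ = ∑ i ∈ S, ∑ j ∈ S, g i j := by simp only [← sum_add_distrib, hdiag]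
    _ = _ := by rw [sum_mul_sum]

end CutWeight

lemma two_pow_pred_eq_div {j : ℕ} (hj : 1 ≤ j) : (2 : ℚ) ^ (j - 1) = 2 ^ j / 2 := by
  rw [pow_sub₀ _ two_ne_zero hj, pow_one, div_eq_mul_inv]

lemma sum_Icc_one_two_pow (n : ℕ) : ∑ j ∈ Icc 1 n, (2 : ℚ) ^ j = 2 ^ (n + 1) - 2 := by
  rw [← Ico_add_one_right_eq_Icc, geom_sum_Ico (by norm_num) (by omega)]
  norm_num

lemma sum_sum_lt_ite_xor_two_pow_pred (n : ℕ) (b : ℕ → Bool) :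
    (∑ i ∈ Icc 1 n, ∑ j ∈ Icc 1 n,
      if i < j ∧ xor (b i) (b j) = true then (2 : ℚ) ^ (i + j - 1) else 0) =
      (∑ j ∈ Icc 1 n, if b j = true then (2 : ℚ) ^ j else 0) *
        (∑ j ∈ Icc 1 n, if b j = true then 0 else (2 : ℚ) ^ j) / 2 := by
  rw [← sum_sum_lt_ite_xor_mul, sum_div]
  refine sum_congr rfl fun i hi => ?_
  rw [sum_div]
  refine sum_congr rfl fun j _ => ?_
  rw [Nat.sub_add_comm (mem_Icc.1 hi).1, pow_add, two_pow_pred_eq_div (mem_Icc.1 hi).1]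
  split_ifs <;> ring

lemma TcVal_eq_mul_div_two (k s : ℕ) (x b : ℕ → Bool) :
    TcVal k s x b =
      ((∑ i ∈ Icc 1 k, (if x i = true then (1 : ℚ) else 0)) +
        (∑ j ∈ Icc 1 (s - 1), (if b j = true then (2 : ℚ) ^ j else 0))) *
      (1 + (∑ i ∈ Icc 1 k, (if x i = true then 0 else (1 : ℚ))) +
        (∑ j ∈ Icc 1 (s - 1), (if b j = true then 0 else (2 : ℚ) ^ j))) / 2 := by
  set X₁ := ∑ i ∈ Icc 1 k, (if x i = true then (1 : ℚ) else 0)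
  set X₀ := ∑ i ∈ Icc 1 k, (if x i = true then 0 else (1 : ℚ))
  set B₁ := ∑ j ∈ Icc 1 (s - 1), (if b j = true then (2 : ℚ) ^ j else 0)
  set B₀ := ∑ j ∈ Icc 1 (s - 1), (if b j = true then 0 else (2 : ℚ) ^ j)
  have hx : (∑ i ∈ Icc 1 k, if x i = true then (1 : ℚ) / 2 else 0) = X₁ / 2 := by
    rw [sum_div]
    exact sum_congr rfl fun i _ => by split_ifs <;> norm_num
  have hb : (∑ j ∈ Icc 1 (s - 1), if b j = true then (2 : ℚ) ^ (j - 1) else 0) = B₁ / 2 := by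
    rw [sum_div]
    refine sum_congr rfl fun j hj => ?_
    rw [two_pow_pred_eq_div (mem_Icc.1 hj).1]
    split_ifs <;> simp
  have hxx : (∑ i ∈ Icc 1 k, ∑ j ∈ Icc 1 k,
      if i < j ∧ xor (x i) (x j) = true then (1 : ℚ) / 2 else 0) = X₁ * X₀ / 2 := by
    have h := sum_sum_lt_ite_xor_mul (Icc 1 k) (fun _ => (1 : ℚ)) x
    simp only [mul_one] at h
    rw [← h, sum_div]
    refine sum_congr rfl fun i _ => ?_
    rw [sum_div]
    exact sum_congr rfl fun j _ => by split_ifs <;> norm_num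
  have hbb := sum_sum_lt_ite_xor_two_pow_pred (s - 1) b
  have hxb : (∑ i ∈ Icc 1 k, ∑ j ∈ Icc 1 (s - 1),
      if xor (x i) (b j) = true then (2 : ℚ) ^ (j - 1) else 0) = (X₁ * B₀ + X₀ * B₁) / 2 := by
    have h := sum_sum_ite_xor_mul (Icc 1 k) (Icc 1 (s - 1)) (fun _ => (1 : ℚ))
      (fun j => (2 : ℚ) ^ j) x b
    simp only [one_mul] at h
    rw [← h, sum_div]
    refine sum_congr rfl fun i _ => ?_
    rw [sum_div]
    refine sum_congr rfl fun j hj => ?_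
    rw [two_pow_pred_eq_div (mem_Icc.1 hj).1]
    split_ifs <;> ring
  rw [TcVal, hx, hb, hxx, hbb, hxb]
  ring

lemma node_weight_total (k s : ℕ) (hs : 1 ≤ s) (x b : ℕ → Bool) :
    (∑ i ∈ Icc 1 k, (if x i = true then (1 : ℚ) else 0)) +
        (∑ j ∈ Icc 1 (s - 1), (if b j = true then (2 : ℚ) ^ j else 0)) +
      (1 + (∑ i ∈ Icc 1 k, (if x i = true then 0 else (1 : ℚ))) +
        (∑ j ∈ Icc 1 (s - 1), (if b j = true then 0 else (2 : ℚ) ^ j))) =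
      k + 2 ^ s - 1 := by
  have hx := sum_ite_add_sum_ite_not (Icc 1 k) (fun _ => (1 : ℚ)) x
  have hb := sum_ite_add_sum_ite_not (Icc 1 (s - 1)) (fun j => (2 : ℚ) ^ j) b
  rw [sum_Icc_one_two_pow, Nat.sub_add_cancel hs] at hb
  simp only [sum_const, Nat.card_Icc, add_tsub_cancel_right, nsmul_eq_mul, mul_one] at hx
  linear_combination hx + hb

theorem Tc_value_eq_cut_weight (s : ℕ) (hs : 2 ≤ s) (k : ℕ) (hk : k = 2 ^ s)
    (x b : ℕ → Bool) :
    (∑ i ∈ Finset.Icc 1 k, (if x i = true then (1 : ℚ) else 0)) +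
        (∑ j ∈ Finset.Icc 1 (s - 1), (if b j = true then (2 : ℚ)^j else 0)) +
      (1 + (∑ i ∈ Finset.Icc 1 k, (if x i = true then 0 else (1 : ℚ))) +
        (∑ j ∈ Finset.Icc 1 (s - 1), (if b j = true then 0 else (2 : ℚ)^j)))
      = 2 * (k : ℚ) - 1 ∧
    TcVal k s x b =
      ((∑ i ∈ Finset.Icc 1 k, (if x i = true then (1 : ℚ) else 0)) +
        (∑ j ∈ Finset.Icc 1 (s - 1), (if b j = true then (2 : ℚ)^j else 0))) *
      (1 + (∑ i ∈ Finset.Icc 1 k, (if x i = true then 0 else (1 : ℚ))) +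
        (∑ j ∈ Finset.Icc 1 (s - 1), (if b j = true then 0 else (2 : ℚ)^j))) / 2 := by
  refine ⟨?_, TcVal_eq_mul_div_two k s x b⟩
  rw [node_weight_total k s (by omega) x b, hk]
  push_cast
  ring
end
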